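/- arXiv:2212.09458 — 5 statements merged into one kernel-verified Lean document; each statement's English description precedes it below -/
import Mathlib

section
/- (Closed-form ID-error trajectory.) Let A ∈ ℝ^{p×d}, B ∈ ℝ^{q×d} with A Bᵀ = 0, let α, β, η ∈ ℝ, W*, W₀ ∈ ℝ^{m×d}, and define W_{t+1} = W_t − 2η (W_t − W*)(α AᵀA + β BᵀB). Then for every t ∈ ℕ, (W_t − W*) Aᵀ = (W₀ − W*) Aᵀ (I_p − 2ηα A Aᵀ)^t, and symmetrically (W_t − W*) Bᵀ = (W₀ − W*) Bᵀ (I_q − 2ηβ B Bᵀ)^t. -/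
open Matrix

lemma step_aux {p d m : ℕ} (A : Matrix (Fin p) (Fin d) ℝ)
    (E : Matrix (Fin m) (Fin d) ℝ) (M : Matrix (Fin d) (Fin d) ℝ) (c a : ℝ)
    (hM : M * Aᵀ = a • (Aᵀ * (A * Aᵀ))) :
    (E - c • (E * M)) * Aᵀ =
      E * Aᵀ * ((1 : Matrix (Fin p) (Fin p) ℝ) - (c * a) • (A * Aᵀ)) := by
  rw [Matrix.sub_mul, Matrix.smul_mul, Matrix.mul_assoc, hM, Matrix.mul_smul,
    Matrix.mul_sub, Matrix.mul_one, Matrix.mul_smul, ← Matrix.mul_assoc,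
    smul_smul]

/-- Closed-form ID-error trajectory: if `A Bᵀ = 0` and
`W_{t+1} = W_t − 2η(W_t − W*)(αAᵀA + βBᵀB)`, then for every `t`,
`(W_t − W*)Aᵀ = (W₀ − W*)Aᵀ(I_p − 2ηα AAᵀ)^t` and symmetrically
`(W_t − W*)Bᵀ = (W₀ − W*)Bᵀ(I_q − 2ηβ BBᵀ)^t`. -/
theorem stmt_4 {p q d m : ℕ} (A : Matrix (Fin p) (Fin d) ℝ) (B : Matrix (Fin q) (Fin d) ℝ)
    (Wstar W0 : Matrix (Fin m) (Fin d) ℝ) (α β η : ℝ) (hAB : A * Bᵀ = 0)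
    (W : ℕ → Matrix (Fin m) (Fin d) ℝ) (hW0 : W 0 = W0)
    (hW : ∀ t, W (t + 1) = W t - (2 * η) • ((W t - Wstar) * (α • (Aᵀ * A) + β • (Bᵀ * B)))) :
    ∀ t : ℕ,
      (W t - Wstar) * Aᵀ =
        (W0 - Wstar) * Aᵀ * ((1 : Matrix (Fin p) (Fin p) ℝ) - (2 * η * α) • (A * Aᵀ)) ^ t ∧
      (W t - Wstar) * Bᵀ =
        (W0 - Wstar) * Bᵀ * ((1 : Matrix (Fin q) (Fin q) ℝ) - (2 * η * β) • (B * Bᵀ)) ^ t := by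
  have hBA : B * Aᵀ = 0 := by
    have := congrArg Matrix.transpose hAB
    simpa [Matrix.transpose_mul] using this
  have hMA : (α • (Aᵀ * A) + β • (Bᵀ * B)) * Aᵀ = α • (Aᵀ * (A * Aᵀ)) := by
    rw [Matrix.add_mul, Matrix.smul_mul, Matrix.smul_mul, Matrix.mul_assoc, Matrix.mul_assoc,
      hBA, Matrix.mul_zero, smul_zero, add_zero]
  have hMB : (α • (Aᵀ * A) + β • (Bᵀ * B)) * Bᵀ = β • (Bᵀ * (B * Bᵀ)) := by
    rw [Matrix.add_mul, Matrix.smul_mul, Matrix.smul_mul, Matrix.mul_assoc, Matrix.mul_assoc,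
      hAB, Matrix.mul_zero, smul_zero, zero_add]
  intro t
  induction t with
  | zero => simp [hW0]
  | succ t ih =>
    obtain ⟨ihA, ihB⟩ := ih
    have hE : W (t + 1) - Wstar =
        (W t - Wstar) - (2 * η) • ((W t - Wstar) * (α • (Aᵀ * A) + β • (Bᵀ * B))) := by
      rw [hW t]; abel
    constructor
    · rw [hE, step_aux A _ _ _ _ hMA, ihA, pow_succ, Matrix.mul_assoc]
    · rw [hE, step_aux B _ _ _ _ hMB, ihB, pow_succ, Matrix.mul_assoc]
end

section
/- (Proposition 3, made precise: on biased data, undirected training makes the OOD loss strictly exceed the ID loss at every iteration.) Let A ∈ ℝ^{p×d} with A Aᵀ = I_p, B ∈ ℝ^{q×d} with B Bᵀ = I_q and A Bᵀ = 0, let α > β > 0 and η > 0 with 2ηα < 1, let W*, W₀ ∈ ℝ^{m×d}, and define W_{t+1} = W_t − 2η (W_t − W*)(α AᵀA + β BᵀB). If the per-sample initial errors are equal and positive, i.e. ‖(W₀ − W*)Aᵀ‖_F²/p = ‖(W₀ − W*)Bᵀ‖_F²/q > 0, then for every t ≥ 1 the per-sample OOD loss strictly exceeds the per-sample ID loss: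 ‖(W_t − W*)Bᵀ‖_F²/q > ‖(W_t − W*)Aᵀ‖_F²/p. -/
open Matrix

/-- Squared Frobenius norm of a real matrix. -/
def frobSq {a b : ℕ} (M : Matrix (Fin a) (Fin b) ℝ) : ℝ := ∑ i, ∑ j, (M i j) ^ 2

lemma frobSq_smul {a b : ℕ} (c : ℝ) (M : Matrix (Fin a) (Fin b) ℝ) :
    frobSq (c • M) = c ^ 2 * frobSq M := by
  simp [frobSq, Finset.mul_sum, mul_pow, Matrix.smul_apply, smul_eq_mul]

lemma frobSq_nonneg {a b : ℕ} (M : Matrix (Fin a) (Fin b) ℝ) : 0 ≤ frobSq M := by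
  apply Finset.sum_nonneg; intro i _; apply Finset.sum_nonneg; intro j _; positivity

/-- Proposition 3, made precise: with orthonormal ID samples (`A Aᵀ = I_p`), orthonormal OOD
samples (`B Bᵀ = I_q`) orthogonal to the ID ones (`A Bᵀ = 0`), weights `α > β > 0`, step size
`η > 0` with `2ηα < 1`, and equal positive per-sample initial errors, undirected gradient
descent makes the per-sample OOD loss strictly exceed the per-sample ID loss at every
iteration `t ≥ 1`. -/
theorem stmt_8 {p q d m : ℕ} (A : Matrix (Fin p) (Fin d) ℝ) (B : Matrix (Fin q) (Fin d) ℝ)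
    (Wstar W0 : Matrix (Fin m) (Fin d) ℝ) (α β η : ℝ)
    (hAA : A * Aᵀ = 1) (hBB : B * Bᵀ = 1) (hAB : A * Bᵀ = 0)
    (hβ : 0 < β) (hαβ : β < α) (hη : 0 < η) (hstep : 2 * η * α < 1)
    (W : ℕ → Matrix (Fin m) (Fin d) ℝ) (hW0 : W 0 = W0)
    (hW : ∀ t, W (t + 1) = W t - (2 * η) • ((W t - Wstar) * (α • (Aᵀ * A) + β • (Bᵀ * B))))
    (hinit : frobSq ((W0 - Wstar) * Aᵀ) / p = frobSq ((W0 - Wstar) * Bᵀ) / q)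
    (hpos : 0 < frobSq ((W0 - Wstar) * Aᵀ) / p) :
    ∀ t : ℕ, 1 ≤ t →
      frobSq ((W t - Wstar) * Aᵀ) / p < frobSq ((W t - Wstar) * Bᵀ) / q := by
  have hBA : B * Aᵀ = 0 := by
    have := congrArg Matrix.transpose hAB
    simpa [Matrix.transpose_mul] using this
  have hSA : (α • (Aᵀ * A) + β • (Bᵀ * B)) * Aᵀ = α • Aᵀ := by
    rw [Matrix.add_mul, Matrix.smul_mul, Matrix.smul_mul, Matrix.mul_assoc,
      Matrix.mul_assoc, hAA, hBA]
    simp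
  have hSB : (α • (Aᵀ * A) + β • (Bᵀ * B)) * Bᵀ = β • Bᵀ := by
    rw [Matrix.add_mul, Matrix.smul_mul, Matrix.smul_mul, Matrix.mul_assoc,
      Matrix.mul_assoc, hBB, hAB]
    simp
  have hA : ∀ t, (W t - Wstar) * Aᵀ = (1 - 2 * η * α) ^ t • ((W0 - Wstar) * Aᵀ) := by
    intro t
    induction t with
    | zero => simp [hW0]
    | succ t ih =>
      rw [hW t, sub_right_comm, Matrix.sub_mul, Matrix.smul_mul, Matrix.mul_assoc, hSA,
        Matrix.mul_smul, smul_smul, ih, smul_smul, ← sub_smul, pow_succ]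
      congr 1; ring
  have hB : ∀ t, (W t - Wstar) * Bᵀ = (1 - 2 * η * β) ^ t • ((W0 - Wstar) * Bᵀ) := by
    intro t
    induction t with
    | zero => simp [hW0]
    | succ t ih =>
      rw [hW t, sub_right_comm, Matrix.sub_mul, Matrix.smul_mul, Matrix.mul_assoc, hSB,
        Matrix.mul_smul, smul_smul, ih, smul_smul, ← sub_smul, pow_succ]
      congr 1; ring
  intro t ht
  rw [hA, hB, frobSq_smul, frobSq_smul, mul_div_assoc, mul_div_assoc, hinit]
  have hq : (0 : ℝ) < frobSq ((W0 - Wstar) * Bᵀ) / q := hinit ▸ hpos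
  have ha0 : 0 < 1 - 2 * η * α := by linarith
  have hab : 1 - 2 * η * α < 1 - 2 * η * β := by nlinarith
  have hlt : (1 - 2 * η * α) ^ t < (1 - 2 * η * β) ^ t :=
    pow_lt_pow_left₀ hab ha0.le (by omega)
  have := pow_lt_pow_left₀ hlt (by positivity : (0:ℝ) ≤ (1 - 2 * η * α) ^ t) two_ne_zero
  exact mul_lt_mul_of_pos_right this hq
end

section
/- (Exact loss-gap formula underlying Eq. 7.) Let A ∈ ℝ^{p×d} with A Aᵀ = I_p, B ∈ ℝ^{q×d} with B Bᵀ = I_q and A Bᵀ = 0, let α, β, η ∈ ℝ, W*, W₀ ∈ ℝ^{m×d}, and define W_{t+1} = W_t − 2η (W_t − W*)(α AᵀA + β BᵀB). Then for every t ∈ ℕ the gap between the OOD and ID training losses is ‖(W_t − W*)Bᵀ‖_F² − ‖(W_t − W*)Aᵀ‖_F² = (1 − 2ηβ)^{2t} ‖(W₀ − W*)Bᵀ‖_F² − (1 − 2ηα)^{2t} ‖(W₀ − W*)Aᵀ‖_F². -/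
open Matrix

/-- Exact loss-gap formula underlying Eq. 7: with orthonormal ID samples (`A Aᵀ = I_p`),
orthonormal OOD samples (`B Bᵀ = I_q`) orthogonal to the ID ones (`A Bᵀ = 0`), and the
gradient-descent recursion `W_{t+1} = W_t − 2η(W_t − W*)(αAᵀA + βBᵀB)`, for every `t`:
`‖(W_t − W*)Bᵀ‖_F² − ‖(W_t − W*)Aᵀ‖_F²
  = (1 − 2ηβ)^{2t} ‖(W₀ − W*)Bᵀ‖_F² − (1 − 2ηα)^{2t} ‖(W₀ − W*)Aᵀ‖_F²`. -/
theorem stmt_9 {p q d m : ℕ} (A : Matrix (Fin p) (Fin d) ℝ) (B : Matrix (Fin q) (Fin d) ℝ)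
    (Wstar W0 : Matrix (Fin m) (Fin d) ℝ) (α β η : ℝ)
    (hAA : A * Aᵀ = 1) (hBB : B * Bᵀ = 1) (hAB : A * Bᵀ = 0)
    (W : ℕ → Matrix (Fin m) (Fin d) ℝ) (hW0 : W 0 = W0)
    (hW : ∀ t, W (t + 1) = W t - (2 * η) • ((W t - Wstar) * (α • (Aᵀ * A) + β • (Bᵀ * B)))) :
    ∀ t : ℕ,
      frobSq ((W t - Wstar) * Bᵀ) - frobSq ((W t - Wstar) * Aᵀ) =
        (1 - 2 * η * β) ^ (2 * t) * frobSq ((W0 - Wstar) * Bᵀ) -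
          (1 - 2 * η * α) ^ (2 * t) * frobSq ((W0 - Wstar) * Aᵀ) := by
  have hBA : B * Aᵀ = 0 := by
    have := congrArg Matrix.transpose hAB
    simpa using this
  have hA : ∀ t, (W t - Wstar) * Aᵀ = (1 - 2 * η * α) ^ t • ((W0 - Wstar) * Aᵀ) := by
    intro t
    induction t with
    | zero => simp [hW0]
    | succ n ih =>
      have : (W (n + 1) - Wstar) * Aᵀ = (1 - 2 * η * α) • ((W n - Wstar) * Aᵀ) := by
        rw [hW]
        have expand : ((W n - Wstar) * (α • (Aᵀ * A) + β • (Bᵀ * B))) * Aᵀ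
            = α • ((W n - Wstar) * Aᵀ) := by
          rw [Matrix.mul_assoc]
          rw [Matrix.add_mul, Matrix.smul_mul, Matrix.smul_mul,
            Matrix.mul_assoc, Matrix.mul_assoc, hAA, hBA]
          simp [Matrix.mul_smul, ← Matrix.mul_assoc]
        rw [sub_right_comm, Matrix.sub_mul, Matrix.smul_mul, expand, smul_smul,
          sub_smul, one_smul]
      rw [this, ih, smul_smul, ← pow_succ']
  have hB : ∀ t, (W t - Wstar) * Bᵀ = (1 - 2 * η * β) ^ t • ((W0 - Wstar) * Bᵀ) := by
    intro t
    induction t with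
    | zero => simp [hW0]
    | succ n ih =>
      have : (W (n + 1) - Wstar) * Bᵀ = (1 - 2 * η * β) • ((W n - Wstar) * Bᵀ) := by
        rw [hW]
        have expand : ((W n - Wstar) * (α • (Aᵀ * A) + β • (Bᵀ * B))) * Bᵀ
            = β • ((W n - Wstar) * Bᵀ) := by
          rw [Matrix.mul_assoc]
          rw [Matrix.add_mul, Matrix.smul_mul, Matrix.smul_mul,
            Matrix.mul_assoc, Matrix.mul_assoc, hAB, hBB]
          simp [Matrix.mul_smul, ← Matrix.mul_assoc]
        rw [sub_right_comm, Matrix.sub_mul, Matrix.smul_mul, expand, smul_smul,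
          sub_smul, one_smul]
      rw [this, ih, smul_smul, ← pow_succ']
  intro t
  rw [hA t, hB t, frobSq_smul, frobSq_smul, ← pow_mul, ← pow_mul, mul_comm t 2]
end

section
/- (Geometric growth of the model's bias toward ID features.) Let A ∈ ℝ^{p×d} with A Aᵀ = I_p, B ∈ ℝ^{q×d} with B Bᵀ = I_q and A Bᵀ = 0, let α > β > 0 and η > 0 with 2ηα < 1, let W*, W₀ ∈ ℝ^{m×d} with ‖(W₀ − W*)Aᵀ‖_F > 0, and define W_{t+1} = W_t − 2η (W_t − W*)(α AᵀA + β BᵀB). Then for every t ∈ ℕ, ‖(W_t − W*)Bᵀ‖_F / ‖(W_t − W*)Aᵀ‖_F = ((1 − 2ηβ)/(1 − 2ηα))^t · ‖(W₀ − W*)Bᵀ‖_F / ‖(W₀ − W*)Aᵀ‖_F, and the growth ratio satisfies (1 − 2ηβ)/(1 − 2ηα) > 1; hence the ratio of OOD error to ID error grows geometrically in t. -/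
open Matrix

/-- Frobenius norm of a real matrix. -/
noncomputable def frobNorm {a b : ℕ} (M : Matrix (Fin a) (Fin b) ℝ) : ℝ :=
  Real.sqrt (∑ i, ∑ j, (M i j) ^ 2)

lemma frobNorm_smul {a b : ℕ} (c : ℝ) (M : Matrix (Fin a) (Fin b) ℝ) :
    frobNorm (c • M) = |c| * frobNorm M := by
  unfold frobNorm
  rw [← Real.sqrt_sq_eq_abs, ← Real.sqrt_mul (sq_nonneg c)]
  congr 1
  simp [Finset.mul_sum, Matrix.smul_apply, mul_pow]

/-- Geometric growth of the model's bias toward ID features: with orthonormal ID and OOD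
samples spanning orthogonal subspaces, `α > β > 0`, `η > 0`, `2ηα < 1`, and a nonzero
initial ID error, the ratio of OOD error to ID error satisfies
`‖(W_t − W*)Bᵀ‖_F / ‖(W_t − W*)Aᵀ‖_F
  = ((1 − 2ηβ)/(1 − 2ηα))^t ⬝ ‖(W₀ − W*)Bᵀ‖_F / ‖(W₀ − W*)Aᵀ‖_F`,
with growth ratio `(1 − 2ηβ)/(1 − 2ηα) > 1`. -/
theorem stmt_10 {p q d m : ℕ} (A : Matrix (Fin p) (Fin d) ℝ) (B : Matrix (Fin q) (Fin d) ℝ)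
    (Wstar W0 : Matrix (Fin m) (Fin d) ℝ) (α β η : ℝ)
    (hAA : A * Aᵀ = 1) (hBB : B * Bᵀ = 1) (hAB : A * Bᵀ = 0)
    (hβ : 0 < β) (hαβ : β < α) (hη : 0 < η) (hstep : 2 * η * α < 1)
    (hinit : 0 < frobNorm ((W0 - Wstar) * Aᵀ))
    (W : ℕ → Matrix (Fin m) (Fin d) ℝ) (hW0 : W 0 = W0)
    (hW : ∀ t, W (t + 1) = W t - (2 * η) • ((W t - Wstar) * (α • (Aᵀ * A) + β • (Bᵀ * B)))) :
    (∀ t : ℕ,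
      frobNorm ((W t - Wstar) * Bᵀ) / frobNorm ((W t - Wstar) * Aᵀ) =
        ((1 - 2 * η * β) / (1 - 2 * η * α)) ^ t *
          (frobNorm ((W0 - Wstar) * Bᵀ) / frobNorm ((W0 - Wstar) * Aᵀ))) ∧
    1 < (1 - 2 * η * β) / (1 - 2 * η * α) := by
  have hα : 0 < α := hβ.trans hαβ
  have ha : 0 < 1 - 2 * η * α := by linarith
  have hb : 0 < 1 - 2 * η * β := by nlinarith
  have hBA : B * Aᵀ = 0 := by
    have := congrArg Matrix.transpose hAB
    simpa [Matrix.transpose_mul] using this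
  have hAB' : A * Bᵀ = 0 := hAB
  have hMA : (α • (Aᵀ * A) + β • (Bᵀ * B)) * Aᵀ = α • Aᵀ := by
    rw [Matrix.add_mul, Matrix.smul_mul, Matrix.smul_mul, Matrix.mul_assoc,
      Matrix.mul_assoc, hAA, hBA, Matrix.mul_one, Matrix.mul_zero, smul_zero, add_zero]
  have hMB : (α • (Aᵀ * A) + β • (Bᵀ * B)) * Bᵀ = β • Bᵀ := by
    rw [Matrix.add_mul, Matrix.smul_mul, Matrix.smul_mul, Matrix.mul_assoc,
      Matrix.mul_assoc, hBB, hAB', Matrix.mul_one, Matrix.mul_zero, smul_zero, zero_add]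
  have hAt : ∀ t, (W t - Wstar) * Aᵀ = (1 - 2 * η * α) ^ t • ((W0 - Wstar) * Aᵀ) := by
    intro t
    induction t with
    | zero => simp [hW0]
    | succ t ih =>
      rw [hW t]
      have : (W t - (2 * η) • ((W t - Wstar) * (α • (Aᵀ * A) + β • (Bᵀ * B))) - Wstar) * Aᵀ
          = (W t - Wstar) * Aᵀ
            - (2 * η) • ((W t - Wstar) * ((α • (Aᵀ * A) + β • (Bᵀ * B)) * Aᵀ)) := by
        rw [sub_right_comm, Matrix.sub_mul, Matrix.smul_mul, Matrix.mul_assoc]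
      rw [this, hMA, Matrix.mul_smul, ih, pow_succ]
      rw [smul_smul, smul_smul, ← sub_smul]
      congr 1
      ring
  have hBt : ∀ t, (W t - Wstar) * Bᵀ = (1 - 2 * η * β) ^ t • ((W0 - Wstar) * Bᵀ) := by
    intro t
    induction t with
    | zero => simp [hW0]
    | succ t ih =>
      rw [hW t]
      have : (W t - (2 * η) • ((W t - Wstar) * (α • (Aᵀ * A) + β • (Bᵀ * B))) - Wstar) * Bᵀ
          = (W t - Wstar) * Bᵀ
            - (2 * η) • ((W t - Wstar) * ((α • (Aᵀ * A) + β • (Bᵀ * B)) * Bᵀ)) := by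
        rw [sub_right_comm, Matrix.sub_mul, Matrix.smul_mul, Matrix.mul_assoc]
      rw [this, hMB, Matrix.mul_smul, ih, pow_succ]
      rw [smul_smul, smul_smul, ← sub_smul]
      congr 1
      ring
  constructor
  · intro t
    rw [hAt t, hBt t, frobNorm_smul, frobNorm_smul,
      abs_of_pos (pow_pos ha t), abs_of_pos (pow_pos hb t), div_pow]
    field_simp
  · rw [one_lt_div ha]
    nlinarith
end

section
/- (Spectral form and limit of the undirected-learning trajectory, Eq. 5.) Let A ∈ ℝ^{p×d} with A Aᵀ = I_p, B ∈ ℝ^{q×d} with B Bᵀ = I_q and A Bᵀ = 0, let α, β, η > 0 with 2ηα < 1 and 2ηβ < 1, and let M = α AᵀA + β BᵀB. Then for every t ∈ ℕ, (I_d − 2ηM)^t = (I_d − AᵀA − BᵀB) + (1 − 2ηα)^t AᵀA + (1 − 2ηβ)^t BᵀB; consequently, for any W₀, W* ∈ ℝ^{m×d}, the gradient-descent iterates W_{t+1} = W_t − 2η(W_t − W*)M converge as t → ∞ to W_∞ = W*(AᵀA + BᵀB) + W₀(I_d − AᵀA − BᵀB): the limit model matches W* on the span of the training features and keeps its initialization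 on the orthogonal complement. -/
open Matrix Filter Topology

/-- Spectral form and limit of the undirected-learning trajectory (Eq. 5): with orthonormal
ID samples (`A Aᵀ = I_p`), orthonormal OOD samples (`B Bᵀ = I_q`) orthogonal to the ID ones
(`A Bᵀ = 0`), `α, β, η > 0`, `2ηα < 1`, `2ηβ < 1`, and `M = αAᵀA + βBᵀB`, one has
`(I_d − 2ηM)^t = (I_d − AᵀA − BᵀB) + (1 − 2ηα)^t AᵀA + (1 − 2ηβ)^t BᵀB` for every `t`;
consequently the gradient-descent iterates `W_{t+1} = W_t − 2η(W_t − W*)M` converge to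
`W∞ = W*(AᵀA + BᵀB) + W₀(I_d − AᵀA − BᵀB)`. -/
theorem stmt_12 {p q d m : ℕ} (A : Matrix (Fin p) (Fin d) ℝ) (B : Matrix (Fin q) (Fin d) ℝ)
    (Wstar W0 : Matrix (Fin m) (Fin d) ℝ) (α β η : ℝ)
    (hAA : A * Aᵀ = 1) (hBB : B * Bᵀ = 1) (hAB : A * Bᵀ = 0)
    (hα : 0 < α) (hβ : 0 < β) (hη : 0 < η)
    (hstepα : 2 * η * α < 1) (hstepβ : 2 * η * β < 1)
    (M : Matrix (Fin d) (Fin d) ℝ) (hM : M = α • (Aᵀ * A) + β • (Bᵀ * B))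
    (W : ℕ → Matrix (Fin m) (Fin d) ℝ) (hW0 : W 0 = W0)
    (hW : ∀ t, W (t + 1) = W t - (2 * η) • ((W t - Wstar) * M)) :
    (∀ t : ℕ,
      ((1 : Matrix (Fin d) (Fin d) ℝ) - (2 * η) • M) ^ t =
        ((1 : Matrix (Fin d) (Fin d) ℝ) - Aᵀ * A - Bᵀ * B) +
          ((1 - 2 * η * α) ^ t) • (Aᵀ * A) + ((1 - 2 * η * β) ^ t) • (Bᵀ * B)) ∧
    Tendsto W atTop
      (𝓝 (Wstar * (Aᵀ * A + Bᵀ * B) +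
        W0 * ((1 : Matrix (Fin d) (Fin d) ℝ) - Aᵀ * A - Bᵀ * B))) := by
  set P : Matrix (Fin d) (Fin d) ℝ := Aᵀ * A with hP
  set Q : Matrix (Fin d) (Fin d) ℝ := Bᵀ * B with hQ
  have hPP : P * P = P := by
    rw [hP, Matrix.mul_assoc, ← Matrix.mul_assoc A Aᵀ A, hAA, Matrix.one_mul]
  have hQQ : Q * Q = Q := by
    rw [hQ, Matrix.mul_assoc, ← Matrix.mul_assoc B Bᵀ B, hBB, Matrix.one_mul]
  have hBA : B * Aᵀ = 0 := by
    have := congrArg Matrix.transpose hAB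
    simpa [Matrix.transpose_mul] using this
  have hPQ : P * Q = 0 := by
    rw [hP, hQ, Matrix.mul_assoc, ← Matrix.mul_assoc A Bᵀ B, hAB, Matrix.zero_mul,
      Matrix.mul_zero]
  have hQP : Q * P = 0 := by
    rw [hP, hQ, Matrix.mul_assoc, ← Matrix.mul_assoc B Aᵀ A, hBA, Matrix.zero_mul,
      Matrix.mul_zero]
  set r : ℝ := 1 - 2 * η * α with hr
  set s : ℝ := 1 - 2 * η * β with hs
  have key : ∀ t : ℕ,
      ((1 : Matrix (Fin d) (Fin d) ℝ) - (2 * η) • M) ^ t =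
        ((1 : Matrix (Fin d) (Fin d) ℝ) - P - Q) + (r ^ t) • P + (s ^ t) • Q := by
    intro t
    induction t with
    | zero => simp [hr, hs]; abel
    | succ t ih =>
      rw [pow_succ, ih, hM]
      have expand : ((1 : Matrix (Fin d) (Fin d) ℝ) - P - Q + r ^ t • P + s ^ t • Q) *
          (1 - (2 * η) • (α • P + β • Q)) =
          (1 - P - Q) + (r ^ t * r) • P + (s ^ t * s) • Q := by
        have h1 : ((1 : Matrix (Fin d) (Fin d) ℝ) - P - Q + r ^ t • P + s ^ t • Q) *
            (1 - (2 * η) • (α • P + β • Q)) =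
            (1 - P - Q + r ^ t • P + s ^ t • Q)
            - (2 * η * α) • ((1 - P - Q + r ^ t • P + s ^ t • Q) * P)
            - (2 * η * β) • ((1 - P - Q + r ^ t • P + s ^ t • Q) * Q) := by
          simp only [Matrix.mul_sub, Matrix.mul_one, Matrix.mul_smul, smul_add, Matrix.mul_add,
            smul_smul]
          ring_nf
          abel
        rw [h1]
        have h2 : ((1 : Matrix (Fin d) (Fin d) ℝ) - P - Q + r ^ t • P + s ^ t • Q) * P
            = (r ^ t) • P := by
          simp only [Matrix.sub_mul, Matrix.add_mul, Matrix.one_mul, Matrix.smul_mul, hPP, hQP,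
            smul_zero]
          abel
        have h3 : ((1 : Matrix (Fin d) (Fin d) ℝ) - P - Q + r ^ t • P + s ^ t • Q) * Q
            = (s ^ t) • Q := by
          simp only [Matrix.sub_mul, Matrix.add_mul, Matrix.one_mul, Matrix.smul_mul, hQQ, hPQ,
            smul_zero]
          abel
        rw [h2, h3]
        have hrr : r ^ t * r = r ^ t - 2 * η * α * r ^ t := by rw [hr]; ring
        have hss : s ^ t * s = s ^ t - 2 * η * β * s ^ t := by rw [hs]; ring
        rw [hrr, hss, sub_smul, sub_smul]
        simp only [smul_smul]
        abel
      rw [expand, pow_succ, pow_succ]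
  refine ⟨key, ?_⟩
  -- closed form for W t
  have hWt : ∀ t : ℕ, W t = Wstar + (W0 - Wstar) * ((1 - (2 * η) • M) ^ t) := by
    intro t
    induction t with
    | zero => simp [hW0]
    | succ t ih =>
      have hd : W t - Wstar = (W0 - Wstar) * ((1 - (2 * η) • M) ^ t) := by
        rw [ih]; abel
      rw [hW t, hd, ih, pow_succ, ← Matrix.mul_assoc, Matrix.mul_sub, Matrix.mul_one,
        Matrix.mul_smul]
      abel
  have hform : ∀ t : ℕ, W t =
      (Wstar * (P + Q) + W0 * ((1 : Matrix (Fin d) (Fin d) ℝ) - P - Q))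
        + (r ^ t) • ((W0 - Wstar) * P) + (s ^ t) • ((W0 - Wstar) * Q) := by
    intro t
    rw [hWt t, key t]
    simp only [Matrix.mul_add, Matrix.mul_smul, Matrix.sub_mul, Matrix.mul_sub, Matrix.mul_one,
      smul_sub]
    abel
  have hrlim : Tendsto (fun t : ℕ => r ^ t) atTop (𝓝 0) := by
    apply tendsto_pow_atTop_nhds_zero_of_abs_lt_one
    rw [abs_lt, hr]
    constructor <;> nlinarith
  have hslim : Tendsto (fun t : ℕ => s ^ t) atTop (𝓝 0) := by
    apply tendsto_pow_atTop_nhds_zero_of_abs_lt_one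
    rw [abs_lt, hs]
    constructor <;> nlinarith
  have hlim : Tendsto
      (fun t => (Wstar * (P + Q) + W0 * ((1 : Matrix (Fin d) (Fin d) ℝ) - P - Q))
        + r ^ t • ((W0 - Wstar) * P) + s ^ t • ((W0 - Wstar) * Q)) atTop
      (𝓝 (Wstar * (P + Q) + W0 * ((1 : Matrix (Fin d) (Fin d) ℝ) - P - Q))) := by
    have h := (((hrlim.smul_const ((W0 - Wstar) * P)).const_add
        (Wstar * (P + Q) + W0 * ((1 : Matrix (Fin d) (Fin d) ℝ) - P - Q))).add
      (hslim.smul_const ((W0 - Wstar) * Q)))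
    simpa using h
  exact hlim.congr fun t => (hform t).symm
end
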